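/- Let Φ be a real number with Φ² = Φ + 1 and let w = (w₁, …, wₙ) be a nonempty word of integers. Then the (2,2) entry (row 2, column 2) of M(Φ, w) equals P·Φ + Q, where P = Σ_{s ≪₃ w} χ(n − |s|) · F_{|s|} · m_s and Q = Σ_{s ≪₃ w} χ(n − |s|) · F_{|s|−1} · m_s, the sums ranging over all subwords s of w with s ≪₃ w. -/

import Mathlib

open Matrix

noncomputable section

/-- The matrix `S = !![0, -1; 1, 0]` over `ℝ`. -/
def S : Matrix (Fin 2) (Fin 2) ℝ := !![0, -1; 1, 0]

/-- The matrix `T(λ) = !![1, λ; 0, 1]` over `ℝ`. -/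
def T (lam : ℝ) : Matrix (Fin 2) (Fin 2) ℝ := !![1, lam; 0, 1]

/-- For a nonempty word `w = (w₁, …, wₙ)` of integers,
`M lam w = T(λ)^{w₁} · S · T(λ)^{w₂} · S · ⋯ · S · T(λ)^{wₙ}`. -/
def M (lam : ℝ) : List ℤ → Matrix (Fin 2) (Fin 2) ℝ
  | [] => 1
  | a :: t => T lam ^ a * (t.map fun b => S * T lam ^ b).prod

/-- The 4-periodic function with `χ(0) = 0, χ(1) = 1, χ(2) = 0, χ(3) = -1`
(the nontrivial Dirichlet character mod 4, extended to all integers). -/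
def chi (m : ℤ) : ℤ := if m % 4 = 1 then 1 else if m % 4 = 3 then -1 else 0

/-- The Fibonacci numbers, extended so that `F₋₁ = 1` (the only negative index used). -/
def fibz (m : ℤ) : ℤ := if m < 0 then 1 else (Nat.fib m.toNat : ℤ)

/-- A subword of `(w₁, …, wₙ)` is encoded by its set `J` of (0-based) positions;
the 1-based indices `j₁ < ⋯ < j_m` are the sorted elements of `J` plus one.
`ll3 J` says `jᵢ ≡ i - 1 (mod 2)`, i.e. `s ≪₃ w`, for all `i` (1-based), stated here in 0-based form. -/
def ll3 {n : ℕ} (J : Finset (Fin n)) : Prop :=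
  ∀ i : ℕ, ∀ hi : i < (J.sort (· ≤ ·)).length,
    ((J.sort (· ≤ ·)).get ⟨i, hi⟩).val % 2 = (i + 1) % 2

instance {n : ℕ} : DecidablePred (ll3 (n := n)) := fun _ =>
  Nat.decidableBallLT _ _

/-!
Multiplying `M(λ, w)` on the right by `S` turns it into the product of the factors
`T(λ)^{wᵢ} S = !![wᵢλ, -1; 1, 0]`. Expanding the first column of such a product one factor at a
time, the entries `u, u'` satisfy `u(a w) = aλ·u(w) - u'(w)` and `u'(a w) = u(w)`: picking the
entry `aλ` keeps the letter `a` in a subword, picking `-1` skips it, which flips the required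
parity of the remaining positions and shifts `χ` by two. Hence the entries are signed sums over
parity-aligned subwords of `λ^{|s|} m_s`, and `Φ^k = F_k Φ + F_{k-1}` gives the result.
-/

open Finset

lemma chi_add_two (m : ℤ) : chi (m + 2) = -chi m := by
  unfold chi
  split_ifs <;> omega

lemma pow_succ_eq_fib_mul_add {R : Type*} [CommRing R] {x : R} (hx : x ^ 2 = x + 1) (k : ℕ) :
    x ^ (k + 1) = Nat.fib (k + 1) * x + Nat.fib k := by
  induction k with
  | zero => simp
  | succ k ih =>
    rw [pow_succ, ih, Nat.fib_add_two]
    push_cast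
    linear_combination (Nat.fib (k + 1) : R) * hx

lemma fibz_natCast (k : ℕ) : fibz k = Nat.fib k := by
  simp [fibz]

lemma pow_eq_fibz_mul_add {R : Type*} [CommRing R] {x : R} (hx : x ^ 2 = x + 1) (k : ℕ) :
    x ^ k = fibz k * x + fibz ((k : ℤ) - 1) := by
  cases k with
  | zero => simp [fibz]
  | succ k =>
    rw [pow_succ_eq_fib_mul_add hx, Nat.cast_succ, add_sub_cancel_right, ← Nat.cast_succ,
      fibz_natCast, fibz_natCast]
    norm_cast

section ParityAligned

variable {n : ℕ}

/-- `ParityAligned 1` is `ll3`, i.e. `s ≪₃ w`, and `ParityAligned 0` encodes `s ≪₁ w`. -/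
def ParityAligned (p : ℕ) (J : Finset (Fin n)) : Prop :=
  ∀ i : ℕ, ∀ hi : i < (J.sort (· ≤ ·)).length,
    ((J.sort (· ≤ ·)).get ⟨i, hi⟩).val % 2 = (i + p) % 2

instance (p : ℕ) : DecidablePred (ParityAligned (n := n) p) := fun _ =>
  Nat.decidableBallLT _ _

lemma parityAligned_empty (p : ℕ) : ParityAligned p (∅ : Finset (Fin n)) := by
  simp [ParityAligned]

lemma parityAligned_add_two {p : ℕ} {J : Finset (Fin n)} :
    ParityAligned (p + 2) J ↔ ParityAligned p J := by
  unfold ParityAligned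
  exact forall₂_congr fun i _ => by omega

lemma sort_map_succEmb (J : Finset (Fin n)) :
    (J.map (Fin.succEmb n)).sort (· ≤ ·) = (J.sort (· ≤ ·)).map Fin.succ :=
  ((Fin.strictMono_succ).strictMonoOn _).map_finsetSort.symm

lemma zero_notMem_map_succEmb (J : Finset (Fin n)) :
    (0 : Fin (n + 1)) ∉ J.map (Fin.succEmb n) := by
  simp [Fin.succ_ne_zero]

lemma parityAligned_map_succEmb {p : ℕ} {J : Finset (Fin n)} :
    ParityAligned p (J.map (Fin.succEmb n)) ↔ ParityAligned (p + 1) J := by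
  unfold ParityAligned
  simp only [sort_map_succEmb, List.get_eq_getElem, List.length_map, List.getElem_map,
    Fin.val_succ]
  exact forall₂_congr fun i _ => by omega

lemma parityAligned_insert_zero {p : ℕ} {J : Finset (Fin n)} :
    ParityAligned p (insert 0 (J.map (Fin.succEmb n))) ↔ p % 2 = 0 ∧ ParityAligned p J := by
  unfold ParityAligned
  rw [sort_insert _ (fun b _ => Fin.zero_le b) (zero_notMem_map_succEmb J), sort_map_succEmb]
  simp only [List.get_eq_getElem, List.length_cons, List.length_map]
  constructor
  · intro h
    refine ⟨by simpa using (h 0 (by simp)).symm, fun i hi => ?_⟩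
    have := h (i + 1) (by omega)
    simp only [List.getElem_cons_succ, List.getElem_map, Fin.val_succ] at this
    omega
  · rintro ⟨hp, h⟩ (_ | i) hi
    · simpa using hp.symm
    · have := h i (by omega)
      simp only [List.getElem_cons_succ, List.getElem_map, Fin.val_succ]
      omega

end ParityAligned

lemma Finset.sum_powerset_map {α β M : Type*} [AddCommMonoid M] (e : α ↪ β) (s : Finset α)
    (f : Finset β → M) :
    ∑ t ∈ (s.map e).powerset, f t = ∑ u ∈ s.powerset, f (u.map e) := by
  classical
  simp_rw [map_eq_image, powerset_image]
  exact sum_image (image_injOn_powerset_of_injOn e.injective.injOn)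

lemma Fin.sum_univ_finset_succ {M : Type*} [AddCommMonoid M] {n : ℕ}
    (f : Finset (Fin (n + 1)) → M) :
    ∑ J, f J = ∑ J : Finset (Fin n), f (J.map (Fin.succEmb n))
      + ∑ J : Finset (Fin n), f (insert 0 (J.map (Fin.succEmb n))) := by
  have huniv : (univ : Finset (Fin (n + 1))) = insert 0 (univ.map (Fin.succEmb n)) := by
    ext x
    cases x using Fin.cases <;> simp
  rw [← powerset_univ, huniv, sum_powerset_insert (zero_notMem_map_succEmb _), sum_powerset_map,
    sum_powerset_map, powerset_univ]

/-- `alignedSum λ w 1` is `Σ_{s ≪₃ w} χ(n - |s|) λ^{|s|} m_s` and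
`alignedSum λ w 0` is `Σ_{s ≪₁ w} χ(n + 1 - |s|) λ^{|s|} m_s`. -/
def alignedSum (lam : ℝ) {n : ℕ} (w : Fin n → ℤ) (p : ℕ) : ℝ :=
  ∑ J ∈ univ.filter (ParityAligned p),
    (chi ((n : ℤ) + 1 - p - J.card) : ℝ) * lam ^ J.card * ∏ j ∈ J, (w j : ℝ)

section alignedSum

variable (lam : ℝ) {n : ℕ}

lemma alignedSum_add_two (w : Fin n → ℤ) (p : ℕ) :
    alignedSum lam w (p + 2) = -alignedSum lam w p := by
  simp only [alignedSum, filter_congr fun J _ => parityAligned_add_two (p := p) (J := J),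
    ← sum_neg_distrib]
  refine sum_congr rfl fun J _ => ?_
  rw [← neg_neg (chi _), ← chi_add_two]
  push_cast
  ring_nf

lemma alignedSum_of_isEmpty (w : Fin 0 → ℤ) (p : ℕ) : alignedSum lam w p = chi (1 - p) := by
  have : univ.filter (ParityAligned (n := 0) p) = {∅} := by
    ext J
    rw [Subsingleton.elim J ∅]
    simpa only [mem_filter, mem_univ, true_and, mem_singleton, iff_true] using
      parityAligned_empty p
  rw [alignedSum, this, sum_singleton]
  simp

lemma alignedSum_cons (a : ℤ) (v : Fin n → ℤ) (p : ℕ) :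
    alignedSum lam (Fin.cons a v) p
      = (if p % 2 = 0 then a * lam * alignedSum lam v p else 0) - alignedSum lam v (p + 1) := by
  have h0 := zero_notMem_map_succEmb (n := n)
  rw [alignedSum, sum_filter, Fin.sum_univ_finset_succ, add_comm]
  refine (congrArg₂ (· + ·) ?_ ?_).trans (sub_eq_add_neg _ _).symm
  · split_ifs with hp
    · rw [alignedSum, sum_filter, mul_sum]
      refine sum_congr rfl fun J _ => ?_
      rw [mul_ite, mul_zero]
      refine if_congr (by simp [parityAligned_insert_zero, hp]) ?_ rfl
      rw [card_insert_of_notMem (h0 J), prod_insert (h0 J), prod_map, card_map]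
      simp only [Fin.cons_zero, Fin.coe_succEmb, Fin.cons_succ]
      push_cast
      ring_nf
    · exact sum_eq_zero fun J _ => if_neg (by simp [parityAligned_insert_zero, hp])
  · rw [alignedSum, sum_filter, ← sum_neg_distrib]
    refine sum_congr rfl fun J _ => ?_
    rw [apply_ite Neg.neg, neg_zero]
    refine if_congr parityAligned_map_succEmb ?_ rfl
    rw [card_map, prod_map, show ((n + 1 : ℕ) : ℤ) + 1 - p - J.card
      = (n : ℤ) + 1 - (p + 1 : ℕ) - J.card + 2 by push_cast; ring, chi_add_two]
    simp only [Fin.coe_succEmb, Fin.cons_succ]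
    push_cast
    ring

end alignedSum

lemma T_mul_T (x y : ℝ) : T x * T y = T (x + y) := by
  simp [T, add_comm]

lemma T_zero : T 0 = 1 := by
  simp [T, one_fin_two]

lemma isUnit_det_T (x : ℝ) : IsUnit (T x).det := by
  simp [T, det_fin_two_of]

lemma T_zpow (x : ℝ) (a : ℤ) : T x ^ a = T (a * x) := by
  induction a using Int.induction_on with
  | zero => simp [T_zero]
  | succ k ih =>
    rw [Matrix.zpow_add_one (isUnit_det_T x), ih, T_mul_T]
    push_cast
    ring_nf
  | pred k ih =>
    have hinv : (T x)⁻¹ = T (-x) := inv_eq_right_inv (by rw [T_mul_T, add_neg_cancel, T_zero])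
    rw [Matrix.zpow_sub_one (isUnit_det_T x), ih, hinv, T_mul_T]
    push_cast
    ring_nf

def MS (lam : ℝ) (l : List ℤ) : Matrix (Fin 2) (Fin 2) ℝ := (l.map fun a => T lam ^ a * S).prod

lemma T_zpow_mul_S (lam : ℝ) (a : ℤ) : T lam ^ a * S = !![a * lam, -1; 1, 0] := by
  rw [T_zpow]
  simp [T, S]

lemma MS_cons (lam : ℝ) (a : ℤ) (t : List ℤ) :
    MS lam (a :: t) = !![a * lam, -1; 1, 0] * MS lam t := by
  rw [MS, List.map_cons, List.prod_cons, T_zpow_mul_S, MS]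

lemma M_cons_mul_S (lam : ℝ) (a : ℤ) (t : List ℤ) : M lam (a :: t) * S = MS lam (a :: t) := by
  have slide : ∀ t : List ℤ, (t.map fun b => S * T lam ^ b).prod * S
      = S * (t.map fun b => T lam ^ b * S).prod := by
    intro t
    induction t with
    | nil => simp
    | cons b t ih => simp only [List.map_cons, List.prod_cons, mul_assoc, ih]
  simp only [M, MS, List.map_cons, List.prod_cons, mul_assoc, slide]

lemma MS_ofFn_apply_zero (lam : ℝ) {n : ℕ} (w : Fin n → ℤ) :
    MS lam (List.ofFn w) 0 0 = alignedSum lam w 0 ∧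
      MS lam (List.ofFn w) 1 0 = alignedSum lam w 1 := by
  induction w using Fin.consInduction with
  | elim0 => simp [MS, alignedSum_of_isEmpty, chi]
  | cons a v ih =>
    rw [List.ofFn_cons, MS_cons, alignedSum_cons, alignedSum_cons, alignedSum_add_two, ← ih.1,
      ← ih.2]
    simp [mul_apply, Fin.sum_univ_two, sub_eq_add_neg]

theorem stmt9 (Φ : ℝ) (hΦ : Φ ^ 2 = Φ + 1) (n : ℕ) (hn : 0 < n) (w : Fin n → ℤ) :
    M Φ (List.ofFn w) 1 1 =
      ((∑ J ∈ Finset.univ.filter (fun J : Finset (Fin n) => ll3 J),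
          chi ((n : ℤ) - J.card) * fibz (J.card : ℤ) * ∏ j ∈ J, w j : ℤ) : ℝ) * Φ +
      ((∑ J ∈ Finset.univ.filter (fun J : Finset (Fin n) => ll3 J),
          chi ((n : ℤ) - J.card) * fibz ((J.card : ℤ) - 1) * ∏ j ∈ J, w j : ℤ) : ℝ) := by
  obtain ⟨a, t, hw⟩ := List.exists_cons_of_length_pos (l := List.ofFn w) (by simpa using hn)
  have hcorner : M Φ (List.ofFn w) 1 1 = MS Φ (List.ofFn w) 1 0 := by
    rw [hw, ← M_cons_mul_S]
    simp [S, mul_apply, Fin.sum_univ_two]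
  rw [hcorner, (MS_ofFn_apply_zero Φ w).2, alignedSum, Int.cast_sum, Int.cast_sum, sum_mul,
    ← sum_add_distrib]
  refine sum_congr rfl fun J _ => ?_
  rw [pow_eq_fibz_mul_add hΦ]
  push_cast
  ring_nf
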